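/- arXiv:2601.16591 — 4 statements merged into one kernel-verified Lean document; each statement's English description precedes it below -/
import Mathlib

section
/- Let R be a ring and let L, M, N be R-modules, each equipped with a decreasing filtration (filⁿ)ₙ∈ℤ by submodules, and let f : L → M and g : M → N be filtered R-linear maps. Assume all three filtrations are exhaustive. If for every n ∈ ℤ the filtered-level sequence is exact at filⁿM, i.e. f(filⁿL) = (ker g) ⊓ filⁿM as submodules of M, then the underlying sequence is exact at M (range f = ker g) and f is strict, i.e. f(filⁿL) = (range f) ⊓ filⁿM for all n. -/
/-- **Exactness from filtered-level exactness.**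
Let `R` be a ring, `L, M, N` be `R`-modules with decreasing exhaustive filtrations, and
`f : L → M`, `g : M → N` filtered `R`-linear maps.  If for every `n` the filtered-level
sequence is exact at `filᵑM`, i.e. `f(filⁿL) = ker g ⊓ filⁿM`, then the underlying sequence
is exact at `M` and `f` is strict. -/
theorem exact_and_strict_of_filtered_exact
    {R L M N : Type*} [Ring R]
    [AddCommGroup L] [Module R L] [AddCommGroup M] [Module R M]
    [AddCommGroup N] [Module R N]
    (filL : ℤ → Submodule R L) (filM : ℤ → Submodule R M) (filN : ℤ → Submodule R N)
    (hLdec : ∀ n : ℤ, filL (n + 1) ≤ filL n)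
    (hMdec : ∀ n : ℤ, filM (n + 1) ≤ filM n)
    (hNdec : ∀ n : ℤ, filN (n + 1) ≤ filN n)
    (hLex : ∀ x : L, ∃ n : ℤ, x ∈ filL n)
    (hMex : ∀ x : M, ∃ n : ℤ, x ∈ filM n)
    (hNex : ∀ x : N, ∃ n : ℤ, x ∈ filN n)
    (f : L →ₗ[R] M) (g : M →ₗ[R] N)
    (hf : ∀ n : ℤ, (filL n).map f ≤ filM n)
    (hg : ∀ n : ℤ, (filM n).map g ≤ filN n)
    (h : ∀ n : ℤ, (filL n).map f = LinearMap.ker g ⊓ filM n) :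
    LinearMap.range f = LinearMap.ker g ∧
      ∀ n : ℤ, (filL n).map f = LinearMap.range f ⊓ filM n := by
  have hrk : LinearMap.range f = LinearMap.ker g := by
    apply le_antisymm
    · rintro _ ⟨x, rfl⟩
      obtain ⟨n, hn⟩ := hLex x
      have : f x ∈ (filL n).map f := ⟨x, hn, rfl⟩
      rw [h n] at this
      exact this.1
    · intro y hy
      obtain ⟨n, hn⟩ := hMex y
      have : y ∈ (filL n).map f := by rw [h n]; exact ⟨hy, hn⟩
      obtain ⟨x, _, rfl⟩ := this
      exact ⟨x, rfl⟩
  exact ⟨hrk, fun n => by rw [h n, hrk]⟩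
end

section
/- Let R be a ring and let A, B be R-modules, each equipped with a finite increasing filtration (Wₙ)ₙ∈ℤ by submodules. Write grₘA := WₘA ⧸ Wₘ₋₁A and grₙB := WₙB ⧸ Wₙ₋₁B for the graded pieces. Assume that for all m ≠ n, every R-module that is simultaneously a subquotient of grₘA and a subquotient of grₙB is zero. Then every R-linear map f : A → B that is filtered (f(WₙA) ≤ WₙB for all n) is strict: f(WₙA) = (range f) ⊓ WₙB for every n ∈ ℤ. -/
universe u v

/-- `X` is a subquotient of `M`: there are submodules `P ≤ Q` of `M` with `X ≃ Q ⧸ P`. -/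
def IsSubquotient (R : Type u) [Ring R] (X : Type v) [AddCommGroup X] [Module R X]
    (M : Type v) [AddCommGroup M] [Module R M] : Prop :=
  ∃ (Q : Submodule R M) (P : Submodule R Q), Nonempty ((Q ⧸ P) ≃ₗ[R] X)

/-- The `n`-th graded piece of an increasing filtration: `grₙM := WₙM ⧸ Wₙ₋₁M`. -/
abbrev grPieceIncr {R : Type u} {M : Type v} [Ring R] [AddCommGroup M] [Module R M]
    (W : ℤ → Submodule R M) (n : ℤ) :=
  W n ⧸ (W (n - 1)).comap (W n).subtype

theorem isSubquotient_quot_aux {R : Type u} [Ring R] {V W : Type v}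
    [AddCommGroup V] [Module R V] [AddCommGroup W] [Module R W]
    (g : V →ₗ[R] W) (D : Submodule R V) (hD : LinearMap.ker g ≤ D) :
    IsSubquotient R (V ⧸ D) W := by
  refine ⟨LinearMap.range g, (D.map g).comap (LinearMap.range g).subtype, ?_⟩
  set P := (D.map g).comap (LinearMap.range g).subtype with hP
  let ψ : V →ₗ[R] (LinearMap.range g ⧸ P) := P.mkQ.comp g.rangeRestrict
  have hsurj : Function.Surjective ψ :=
    (Submodule.mkQ_surjective P).comp g.surjective_rangeRestrict
  have hker : LinearMap.ker ψ = D := by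
    ext x
    have : ψ x = 0 ↔ g x ∈ D.map g := by
      simp only [ψ, LinearMap.comp_apply, Submodule.mkQ_apply,
        Submodule.Quotient.mk_eq_zero, hP, Submodule.mem_comap, Submodule.coe_subtype]
      rfl
    rw [LinearMap.mem_ker, this]
    constructor
    · rintro ⟨d, hd, hdx⟩
      have : x - d ∈ LinearMap.ker g := by
        simp [LinearMap.mem_ker, map_sub, hdx]
      have := hD this
      simpa using D.add_mem this hd
    · intro hx
      exact ⟨x, hx, rfl⟩
  have e := ψ.quotKerEquivOfSurjective hsurj
  exact ⟨((Submodule.quotEquivOfEq D (LinearMap.ker ψ) hker.symm).trans e).symm⟩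

/-- **Strictness criterion.**  If the weight-graded pieces of `A` and `B` in distinct
degrees have no nonzero common subquotient, then every filtered linear map `A → B` is
strict. -/
theorem strict_of_no_common_subquotient
    {R : Type u} [Ring R] {A B : Type v}
    [AddCommGroup A] [Module R A] [AddCommGroup B] [Module R B]
    (WA : ℤ → Submodule R A) (WB : ℤ → Submodule R B)
    (hWA : ∀ n : ℤ, WA n ≤ WA (n + 1)) (hWB : ∀ n : ℤ, WB n ≤ WB (n + 1))
    (hWAfin : ∃ n₁ n₂ : ℤ, n₁ ≤ n₂ ∧ (∀ n < n₁, WA n = ⊥) ∧ ∀ n, n₂ ≤ n → WA n = ⊤)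
    (hWBfin : ∃ n₁ n₂ : ℤ, n₁ ≤ n₂ ∧ (∀ n < n₁, WB n = ⊥) ∧ ∀ n, n₂ ≤ n → WB n = ⊤)
    (hsub : ∀ m n : ℤ, m ≠ n → ∀ (X : Type v) [AddCommGroup X] [Module R X],
      IsSubquotient R X (grPieceIncr WA m) → IsSubquotient R X (grPieceIncr WB n) →
      Subsingleton X)
    (f : A →ₗ[R] B) (hf : ∀ n : ℤ, (WA n).map f ≤ WB n) :
    ∀ n : ℤ, (WA n).map f = LinearMap.range f ⊓ WB n := by
  obtain ⟨a₁, a₂, ha12, hAbot, hAtop⟩ := hWAfin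
  obtain ⟨b₁, b₂, hb12, hBbot, hBtop⟩ := hWBfin
  have hAmono : Monotone WA := monotone_int_of_le_succ hWA
  have hBmono : Monotone WB := monotone_int_of_le_succ hWB
  intro n
  apply le_antisymm
  · rintro y ⟨x, hx, rfl⟩
    exact ⟨⟨x, rfl⟩, hf n ⟨x, hx, rfl⟩⟩
  · rintro b ⟨⟨a, rfl⟩, hbn⟩
    by_cases hb0 : f a = 0
    · rw [hb0]; exact zero_mem _
    -- least m with f a ∈ f (WA m)
    have hbdd : ∃ lb : ℤ, (f a ∈ (WA lb).map f) ∧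
        ∀ z : ℤ, (f a ∈ (WA z).map f) → lb ≤ z := by
      refine Int.exists_least_of_bdd ⟨a₁, ?_⟩ ⟨a₂, ?_⟩
      · intro z hz
        by_contra hlt
        push_neg at hlt
        rw [hAbot z hlt, Submodule.map_bot, Submodule.mem_bot] at hz
        exact hb0 hz
      · rw [hAtop a₂ le_rfl]; exact ⟨a, trivial, rfl⟩
    obtain ⟨m, hm, hmin⟩ := hbdd
    by_cases hmn : m ≤ n
    · exact Submodule.map_mono (hAmono hmn) hm
    push_neg at hmn
    exfalso
    -- the descending induction predicate
    set P' : ℤ → Prop := fun j =>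
      ∀ x : A, x ∈ WA m → f x ∈ WB j → ∃ z ∈ LinearMap.ker f, x - z ∈ WA (m - 1)
      with hP'
    have hbase : ∀ j : ℤ, j < b₁ → P' j := by
      intro j hj x hxm hxj
      rw [hBbot j hj, Submodule.mem_bot] at hxj
      exact ⟨x, hxj, by simp⟩
    have hstep : ∀ j : ℤ, j + 1 ≤ m - 1 → P' j → P' (j + 1) := by
      intro j hjm ih x hxm hxj1
      set KJ : Submodule R A := WA m ⊓ (WB (j + 1)).comap f with hKJ
      set D : Submodule R ↥KJ :=
        ((WA m ⊓ (WB j).comap f) ⊔ (KJ ⊓ WA (m - 1))).comap KJ.subtype with hD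
      -- map to grPieceIncr WA m
      let g₁ : ↥KJ →ₗ[R] grPieceIncr WA m :=
        ((WA (m - 1)).comap (WA m).subtype).mkQ.comp
          (Submodule.inclusion (inf_le_left : KJ ≤ WA m))
      have hker₁ : LinearMap.ker g₁ ≤ D := by
        intro x hx
        have hx' : (x : A) ∈ WA (m - 1) := by
          simpa [g₁, LinearMap.mem_ker, Submodule.Quotient.mk_eq_zero,
            Submodule.inclusion] using hx
        exact Submodule.mem_sup_right (Submodule.mem_inf.mpr ⟨x.2, hx'⟩)
      -- map to grPieceIncr WB (j+1)
      have hres : ∀ x : A, x ∈ KJ → f x ∈ WB (j + 1) := fun x hx => hx.2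
      let g₂ : ↥KJ →ₗ[R] grPieceIncr WB (j + 1) :=
        ((WB (j + 1 - 1)).comap (WB (j + 1)).subtype).mkQ.comp (f.restrict hres)
      have hker₂ : LinearMap.ker g₂ ≤ D := by
        intro x hx
        have hx' : f (x : A) ∈ WB (j + 1 - 1) := by
          simpa [g₂, LinearMap.mem_ker, Submodule.Quotient.mk_eq_zero,
            LinearMap.restrict_apply] using hx
        rw [show (j : ℤ) + 1 - 1 = j by ring] at hx'
        exact Submodule.mem_sup_left (Submodule.mem_inf.mpr ⟨x.2.1, hx'⟩)
      have hsq₁ : IsSubquotient R (↥KJ ⧸ D) (grPieceIncr WA m) :=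
        isSubquotient_quot_aux g₁ D hker₁
      have hsq₂ : IsSubquotient R (↥KJ ⧸ D) (grPieceIncr WB (j + 1)) :=
        isSubquotient_quot_aux g₂ D hker₂
      have hss : Subsingleton (↥KJ ⧸ D) :=
        hsub m (j + 1) (by omega) _ hsq₁ hsq₂
      have hxKJ : x ∈ KJ := Submodule.mem_inf.mpr ⟨hxm, hxj1⟩
      have hmem : (⟨x, hxKJ⟩ : ↥KJ) ∈ D := by
        rw [← Submodule.Quotient.mk_eq_zero D]
        exact Subsingleton.elim _ _
      have hmem' : x ∈ (WA m ⊓ (WB j).comap f) ⊔ (KJ ⊓ WA (m - 1)) := hmem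
      obtain ⟨y, hy, w, hw, hyw⟩ := Submodule.mem_sup.mp hmem'
      obtain ⟨z, hz, hyz⟩ := ih y hy.1 hy.2
      refine ⟨z, hz, ?_⟩
      have : x - z = (y - z) + w := by rw [← hyw]; abel
      rw [this]
      exact add_mem hyz hw.2
    -- conclude P' (m-1)
    have hP : P' (m - 1) := by
      by_cases hc : m - 1 < b₁
      · exact hbase _ hc
      · push_neg at hc
        have key : ∀ j : ℤ, b₁ - 1 ≤ j → (j ≤ m - 1 → P' j) :=
          Int.le_induction (motive := fun j _ => j ≤ m - 1 → P' j)
            (fun _ => hbase _ (by omega))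
            (fun k _ ihk hkm => hstep k hkm (ihk (by omega)))
        exact key (m - 1) (by omega) le_rfl
    obtain ⟨a', ha'm, ha'b⟩ := hm
    have hfa' : f a' ∈ WB (m - 1) := by
      rw [ha'b]; exact hBmono (by omega) hbn
    obtain ⟨z, hz, hw⟩ := hP a' ha'm hfa'
    have : f a ∈ (WA (m - 1)).map f := by
      refine ⟨a' - z, hw, ?_⟩
      rw [map_sub, hz, sub_zero, ha'b]
    have := hmin _ this
    omega
end

section
/- Let k be a field and V a finite-dimensional k-vector space with a finite decreasing filtration (filⁿ)ₙ∈ℤ by subspaces. Call a family (V_i)_{i∈ℤ} of subspaces a splitting of the filtration if the V_i are independent and filⁿ = Σ_{i≥n} V_i for every n. Let U be the set of k-linear automorphisms u of V such that (u − id)(filⁿ) ⊆ filⁿ⁺¹ for all n. Then: (i) for any splitting (V_i) and any u ∈ U, the family (u(V_i))_i is again a splitting of the filtration; (ii) for any two splittings (V_i) and (V'_i) of the filtration there exists exactly one u ∈ U with u(V_i) = V'_i for all i. -/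
/-- A family `(V_i)_{i ∈ ℤ}` of subspaces is a splitting of the decreasing filtration
`fil` if the `V_i` are independent and `filⁿ = Σ_{i ≥ n} V_i` for every `n`. -/
def IsSplitting {k V : Type*} [Field k] [AddCommGroup V] [Module k V]
    (fil : ℤ → Submodule k V) (Vi : ℤ → Submodule k V) : Prop :=
  iSupIndep Vi ∧ ∀ n : ℤ, fil n = ⨆ i : ℤ, ⨆ _ : n ≤ i, Vi i

namespace SplittingAux

variable {k V : Type*} [Field k] [AddCommGroup V] [Module k V]
variable {fil Vi Vi' : ℤ → Submodule k V}

theorem le_fil (hs : IsSplitting fil Vi) (i : ℤ) : Vi i ≤ fil i := by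
  rw [hs.2 i]
  exact le_iSup₂ (f := fun j (_ : i ≤ j) => Vi j) i le_rfl

theorem fil_eq (hs : IsSplitting fil Vi) (n : ℤ) : fil n = Vi n ⊔ fil (n + 1) := by
  rw [hs.2 n, hs.2 (n + 1)]
  apply le_antisymm
  · refine iSup₂_le fun i hi => ?_
    rcases eq_or_lt_of_le hi with h | h
    · exact h ▸ le_sup_left
    · exact le_sup_of_le_right (le_iSup₂ (f := fun j (_ : n + 1 ≤ j) => Vi j) i h)
  · refine sup_le (le_iSup₂ (f := fun j (_ : n ≤ j) => Vi j) n le_rfl) ?_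
    exact iSup₂_le fun i hi => le_iSup₂ (f := fun j (_ : n ≤ j) => Vi j) i (by omega)

theorem inf_eq_bot (hs : IsSplitting fil Vi) (n : ℤ) : Vi n ⊓ fil (n + 1) = ⊥ := by
  have h := hs.1 n
  refine disjoint_iff.mp (h.mono_right ?_)
  rw [hs.2 (n + 1)]
  exact iSup₂_le fun i hi => le_iSup₂ (f := fun j (_ : j ≠ n) => Vi j) i (by omega)

theorem iSup_eq_top (hs : IsSplitting fil Vi) {a : ℤ} (ha : fil a = ⊤) :
    ⨆ i, Vi i = ⊤ := by
  rw [eq_top_iff, ← ha, hs.2 a]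
  exact iSup₂_le fun i _ => le_iSup Vi i

/-- The composite `Vi i → V → V ⧸ fil (i+1)`. -/
noncomputable def psi (fil Vi : ℤ → Submodule k V) (i : ℤ) :
    Vi i →ₗ[k] V ⧸ fil (i + 1) :=
  ((fil (i + 1)).mkQ).comp (Vi i).subtype

theorem psi_inj (hs : IsSplitting fil Vi) (i : ℤ) : Function.Injective (psi fil Vi i) := by
  rw [← LinearMap.ker_eq_bot, psi, LinearMap.ker_comp, Submodule.ker_mkQ,
    Submodule.eq_bot_iff]
  rintro x hx
  have hmem : (x : V) ∈ Vi i ⊓ fil (i + 1) := ⟨x.2, hx⟩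
  rw [inf_eq_bot hs i] at hmem
  exact Subtype.ext hmem

theorem range_psi (i : ℤ) :
    LinearMap.range (psi fil Vi i) = (Vi i).map (fil (i + 1)).mkQ := by
  rw [psi, LinearMap.range_comp, Submodule.range_subtype]

theorem map_mkQ_eq (hs : IsSplitting fil Vi) (i : ℤ) :
    (Vi i).map (fil (i + 1)).mkQ = (fil i).map (fil (i + 1)).mkQ := by
  conv_rhs => rw [fil_eq hs i]
  rw [Submodule.map_sup]
  have hbot : (fil (i + 1)).map (fil (i + 1)).mkQ = ⊥ := by
    rw [Submodule.eq_bot_iff]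
    rintro y ⟨x, hx, rfl⟩
    rwa [Submodule.mkQ_apply, Submodule.Quotient.mk_eq_zero]
  rw [hbot, sup_bot_eq]

/-- The canonical isomorphism `Vi i ≃ Vi' i` between two splittings, through the
quotient `V ⧸ fil (i+1)`. -/
noncomputable def phi (hs : IsSplitting fil Vi) (hs' : IsSplitting fil Vi') (i : ℤ) :
    Vi i ≃ₗ[k] Vi' i :=
  (LinearEquiv.ofInjective _ (psi_inj hs i)).trans
    ((LinearEquiv.ofEq _ _
      (by rw [range_psi, range_psi, map_mkQ_eq hs i, map_mkQ_eq hs' i])).trans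
      (LinearEquiv.ofInjective _ (psi_inj hs' i)).symm)

theorem psi_phi (hs : IsSplitting fil Vi) (hs' : IsSplitting fil Vi') (i : ℤ) (x : Vi i) :
    psi fil Vi' i (phi hs hs' i x) = psi fil Vi i x := by
  have h1 : (LinearEquiv.ofInjective _ (psi_inj hs' i)) (phi hs hs' i x) =
      (LinearEquiv.ofEq _ _
        (by rw [range_psi, range_psi, map_mkQ_eq hs i, map_mkQ_eq hs' i]))
        ((LinearEquiv.ofInjective _ (psi_inj hs i)) x) := by
    simp [phi]
  have := congrArg (Subtype.val) h1
  simpa [LinearEquiv.ofInjective_apply] using this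

theorem phi_sub_mem (hs : IsSplitting fil Vi) (hs' : IsSplitting fil Vi') (i : ℤ) (x : Vi i) :
    ((phi hs hs' i x : V) - (x : V)) ∈ fil (i + 1) := by
  have h := psi_phi hs hs' i x
  simp only [psi, LinearMap.comp_apply, Submodule.subtype_apply, Submodule.mkQ_apply] at h
  exact (Submodule.Quotient.eq _).mp h

end SplittingAux

open scoped DirectSum in
open SplittingAux in
/-- **Splittings of a filtered vector space form a torsor under the unipotent group.**
Let `V` be a finite-dimensional vector space with a finite decreasing filtration `fil`,
and let `U` be the group of automorphisms `u` with `(u - id)(filⁿ) ⊆ filⁿ⁺¹` for all `n`.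
Then (i) `U` carries splittings to splittings, and (ii) for any two splittings there is
exactly one `u ∈ U` carrying the first to the second. -/
theorem splittings_pseudotorsor
    {k V : Type*} [Field k] [AddCommGroup V] [Module k V] [FiniteDimensional k V]
    (fil : ℤ → Submodule k V)
    (hfil : ∀ n : ℤ, fil (n + 1) ≤ fil n)
    (hfin : (∃ a : ℤ, ∀ n ≤ a, fil n = ⊤) ∧ (∃ b : ℤ, ∀ n, b ≤ n → fil n = ⊥)) :
    (∀ Vi : ℤ → Submodule k V, IsSplitting fil Vi →
      ∀ u : V ≃ₗ[k] V, (∀ n : ℤ, ∀ v ∈ fil n, u v - v ∈ fil (n + 1)) →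
        IsSplitting fil fun i => (Vi i).map (u : V →ₗ[k] V)) ∧
    (∀ Vi Vi' : ℤ → Submodule k V, IsSplitting fil Vi → IsSplitting fil Vi' →
      ∃! u : V ≃ₗ[k] V,
        (∀ n : ℤ, ∀ v ∈ fil n, u v - v ∈ fil (n + 1)) ∧
        ∀ i : ℤ, (Vi i).map (u : V →ₗ[k] V) = Vi' i) := by
  have hanti : Antitone fil := antitone_int_of_succ_le hfil
  obtain ⟨⟨a, ha⟩, ⟨b, hb⟩⟩ := hfin
  -- `u` preserves each `fil n`
  have hmap_fil : ∀ u : V ≃ₗ[k] V, (∀ n : ℤ, ∀ v ∈ fil n, u v - v ∈ fil (n + 1)) →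
      ∀ n : ℤ, (fil n).map (u : V →ₗ[k] V) = fil n := by
    intro u hu n
    have hle : (fil n).map (u : V →ₗ[k] V) ≤ fil n := by
      rintro _ ⟨v, hv, rfl⟩
      have : (u v - v) + v ∈ fil n :=
        (fil n).add_mem (hfil n (hu n v hv)) hv
      simpa using this
    exact Submodule.eq_of_le_of_finrank_le hle (LinearEquiv.finrank_map_eq u (fil n)).ge
  constructor
  · -- part (i)
    intro Vi hs u hu
    constructor
    · exact hs.1.map_orderIso (Submodule.orderIsoMapComap u)
    · intro n
      conv_lhs => rw [← hmap_fil u hu n, hs.2 n]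
      simp only [Submodule.map_iSup]
  · -- part (ii)
    intro Vi Vi' hs hs'
    classical
    have htop : ⨆ i, Vi i = ⊤ := iSup_eq_top hs (ha a le_rfl)
    have htop' : ⨆ i, Vi' i = ⊤ := iSup_eq_top hs' (ha a le_rfl)
    have hI : DirectSum.IsInternal Vi :=
      (DirectSum.isInternal_submodule_iff_iSupIndep_and_iSup_eq_top Vi).mpr ⟨hs.1, htop⟩
    have hI' : DirectSum.IsInternal Vi' :=
      (DirectSum.isInternal_submodule_iff_iSupIndep_and_iSup_eq_top Vi').mpr ⟨hs'.1, htop'⟩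
    let e : (⨁ i, Vi i) ≃ₗ[k] V := LinearEquiv.ofBijective (DirectSum.coeLinearMap Vi) hI
    let e' : (⨁ i, Vi' i) ≃ₗ[k] V := LinearEquiv.ofBijective (DirectSum.coeLinearMap Vi') hI'
    let m : (⨁ i, Vi i) ≃ₗ[k] ⨁ i, Vi' i :=
      DFinsupp.mapRange.linearEquiv (phi hs hs')
    let u : V ≃ₗ[k] V := (e.symm.trans m).trans e'
    -- key computation : `u x = phi x` for `x ∈ Vi i`
    have hkey : ∀ (i : ℤ) (x : Vi i), u (x : V) = (phi hs hs' i x : V) := by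
      intro i x
      have h1 : e.symm (x : V) = DirectSum.of (fun i => Vi i) i x := by
        rw [LinearEquiv.symm_apply_eq]
        exact (DirectSum.coeLinearMap_of Vi i x).symm
      have h2 : m (DirectSum.of (fun i => Vi i) i x) =
          DirectSum.of (fun i => Vi' i) i (phi hs hs' i x) := by
        simp only [m, DFinsupp.mapRange.linearEquiv_apply]
        exact DFinsupp.mapRange_single (hf := fun j => (phi hs hs' j).map_zero)
      show e' (m (e.symm (x : V))) = _
      rw [h1, h2]
      exact DirectSum.coeLinearMap_of Vi' i (phi hs hs' i x)
    have hu1 : ∀ n : ℤ, ∀ v ∈ fil n, u v - v ∈ fil (n + 1) := by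
      intro n v hv
      have hle : fil n ≤ (fil (n + 1)).comap ((u : V →ₗ[k] V) - LinearMap.id) := by
        rw [hs.2 n]
        refine iSup₂_le fun i hi => ?_
        intro x hx
        simp only [Submodule.mem_comap, LinearMap.sub_apply, LinearMap.id_coe, id_eq,
          LinearEquiv.coe_coe]
        have := phi_sub_mem hs hs' i ⟨x, hx⟩
        rw [← hkey i ⟨x, hx⟩] at this
        exact hanti (by omega) this
      have := hle hv
      simpa using this
    have hu2 : ∀ i : ℤ, (Vi i).map (u : V →ₗ[k] V) = Vi' i := by
      intro i
      apply le_antisymm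
      · rintro _ ⟨x, hx, rfl⟩
        rw [LinearEquiv.coe_coe, hkey i ⟨x, hx⟩]
        exact (phi hs hs' i ⟨x, hx⟩).2
      · intro y hy
        refine ⟨((phi hs hs' i).symm ⟨y, hy⟩ : V),
          ((phi hs hs' i).symm ⟨y, hy⟩).2, ?_⟩
        rw [LinearEquiv.coe_coe, hkey i ((phi hs hs' i).symm ⟨y, hy⟩)]
        simp
    refine ⟨u, ⟨hu1, hu2⟩, ?_⟩
    -- uniqueness
    rintro u' ⟨hu'1, hu'2⟩
    apply LinearEquiv.toLinearMap_injective
    have hagree : ∀ (i : ℤ) (x : V), x ∈ Vi i → u' x = u x := by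
      intro i x hx
      have h1 : u' x - u x ∈ fil (i + 1) := by
        have hfx : x ∈ fil i := le_fil hs i hx
        have := (fil (i + 1)).sub_mem (hu'1 i x hfx) (hu1 i x hfx)
        simpa using this
      have h2 : u' x - u x ∈ Vi' i := by
        have hx1 : u' x ∈ Vi' i := hu'2 i ▸ Submodule.mem_map_of_mem hx
        have hx2 : u x ∈ Vi' i := hu2 i ▸ Submodule.mem_map_of_mem hx
        exact (Vi' i).sub_mem hx1 hx2
      have : u' x - u x ∈ Vi' i ⊓ fil (i + 1) := ⟨h2, h1⟩
      rw [inf_eq_bot hs' i] at this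
      have := (Submodule.mem_bot k).mp this
      linear_combination (norm := module) this
    have hker : (⊤ : Submodule k V) ≤
        LinearMap.ker ((u' : V →ₗ[k] V) - (u : V →ₗ[k] V)) := by
      rw [← htop]
      refine iSup_le fun i => ?_
      intro x hx
      simp only [LinearMap.mem_ker, LinearMap.sub_apply, LinearEquiv.coe_coe]
      rw [hagree i x hx, sub_self]
    ext x
    have := hker (Submodule.mem_top (x := x))
    simp only [LinearMap.mem_ker, LinearMap.sub_apply, LinearEquiv.coe_coe] at this
    simpa [sub_eq_zero] using this
end

section
/- Let K be a field, σ : K ≃+* K a ring automorphism, and d a positive integer with σ^d = id. Let V be a finite-dimensional K-vector space and f : V → V an additive map that is σ-semilinear, i.e. f(c • v) = σ(c) • f(v) for all c ∈ K and v ∈ V. Assume the d-fold iterate f^[d] (which is K-linear since σ^d = id) has no nonzero fixed vector: f^[d](v) = v implies v = 0. Then the map v ↦ f(v) − v is a bijection of V; equivalently, for every w ∈ V there exists a unique v ∈ V with f(v) − v = w. -/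
/-- **Invertibility of `φ − 1` for a semilinear operator with no fixed vectors of its
linear power.**
Let `K` be a field, `σ` a ring automorphism of `K` with `σ^d = id` for some `d > 0`,
`V` a finite-dimensional `K`-vector space, and `f : V → V` an additive `σ`-semilinear
map such that the `K`-linear iterate `f^[d]` has no nonzero fixed vector.  Then
`v ↦ f(v) − v` is a bijection of `V`. -/
theorem bijective_frobenius_sub_id
    {K V : Type*} [Field K] [AddCommGroup V] [Module K V] [FiniteDimensional K V]
    (σ : K ≃+* K) (d : ℕ) (hd : 0 < d) (hσ : (⇑σ)^[d] = id)
    (f : V → V)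
    (hadd : ∀ v w : V, f (v + w) = f v + f w)
    (hsmul : ∀ (c : K) (v : V), f (c • v) = σ c • f v)
    (hfix : ∀ v : V, f^[d] v = v → v = 0) :
    Function.Bijective (fun v : V => f v - v) := by
  have hf0 : f 0 = 0 := by
    have := hadd 0 0
    simpa using this.symm
  have hsub : ∀ v w : V, f (v - w) = f v - f w := by
    intro v w
    have h1 := hadd (v - w) w
    simp only [sub_add_cancel] at h1
    rw [h1]; abel
  have hadd_iter : ∀ (n : ℕ) (v w : V), f^[n] (v + w) = f^[n] v + f^[n] w := by
    intro n
    induction n with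
    | zero => intro v w; simp
    | succ n ih =>
        intro v w
        simp only [Function.iterate_succ', Function.comp_apply, ih, hadd]
  have hsub_iter : ∀ (n : ℕ) (v w : V), f^[n] (v - w) = f^[n] v - f^[n] w := by
    intro n v w
    have h1 := hadd_iter n (v - w) w
    simp only [sub_add_cancel] at h1
    rw [h1]; abel
  have hsmul_iter : ∀ (n : ℕ) (c : K) (v : V), f^[n] (c • v) = (⇑σ)^[n] c • f^[n] v := by
    intro n
    induction n with
    | zero => intro c v; simp
    | succ n ih =>
        intro c v
        simp only [Function.iterate_succ', Function.comp_apply, ih, hsmul]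
  have hfsum : ∀ (n : ℕ) (u : V),
      f (∑ i ∈ Finset.range n, f^[i] u) = ∑ i ∈ Finset.range n, f^[i+1] u := by
    intro n u
    induction n with
    | zero => simpa using hf0
    | succ n ih =>
        rw [Finset.sum_range_succ, hadd, ih, Finset.sum_range_succ,
          ← Function.iterate_succ_apply' f n u]
  -- the K-linear map T - 1 where T = f^[d]
  let L : V →ₗ[K] V :=
    { toFun := fun v => f^[d] v - v
      map_add' := by intro v w; simp only [hadd_iter]; abel
      map_smul' := by
        intro c v
        simp only [hsmul_iter, RingHom.id_apply, hσ, id_eq, smul_sub] }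
  have hLinj : Function.Injective L := by
    intro v w h
    have h' : f^[d] v - v = f^[d] w - w := h
    have h2 : f^[d] (v - w) = v - w := by
      rw [hsub_iter]
      exact sub_eq_sub_iff_sub_eq_sub.mp h'
    exact sub_eq_zero.mp (hfix _ h2)
  have hLsurj : Function.Surjective L := (LinearMap.injective_iff_surjective).mp hLinj
  constructor
  · -- injective
    intro v w h
    have hv : f v - v = f w - w := h
    have hvw : f (v - w) = v - w := by
      rw [hsub]
      exact sub_eq_sub_iff_sub_eq_sub.mp hv
    have hiter : ∀ n, f^[n] (v - w) = v - w := by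
      intro n
      induction n with
      | zero => simp
      | succ n ih => simp [Function.iterate_succ', Function.comp_apply, ih, hvw]
    exact sub_eq_zero.mp (hfix _ (hiter d))
  · -- surjective
    intro w
    obtain ⟨u, hu⟩ := hLsurj w
    refine ⟨∑ i ∈ Finset.range d, f^[i] u, ?_⟩
    simp only
    rw [hfsum, ← Finset.sum_sub_distrib, Finset.sum_range_sub (fun i => f^[i] u) d]
    simpa [L] using hu
end
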